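/- Every invariant set S satisfies PA_Y ∩ PA(AN_Y ∩ CH_E) ⊆ S, i.e., every node that is a parent of Y and also a parent of some node that is both an ancestor of Y and a child of E belongs to every invariant set. -/

import Mathlib

/-- Nodes of the graph: the environment node `E`, predictor nodes `V j` for
`j ∈ {1, …, d}` (represented by `Fin d`), and the response node `Y`. -/
inductive Node (d : ℕ) : Type where
  | E : Node d
  | V : Fin d → Node d
  | Y : Node d
deriving DecidableEq

/-- A directed acyclic graph on `{E} ∪ {1, …, d} ∪ {Y}` in which `E` has no
parents (`E` is exogenous). -/
structure CGraph (d : ℕ) where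
  adj : Node d → Node d → Prop
  acyclic : ∀ v, ¬ Relation.TransGen adj v v
  exogenous : ∀ v, ¬ adj v Node.E

namespace CGraph

variable {d : ℕ} (G : CGraph d)

/-- Undirected adjacency: an edge between `u` and `v` in either direction. -/
def Edge (u v : Node d) : Prop := G.adj u v ∨ G.adj v u

/-- `p` is a path between `a` and `b`: a duplicate-free list of nodes starting
at `a`, ending at `b`, with consecutive nodes adjacent (in either direction). -/
def IsPath (p : List (Node d)) (a b : Node d) : Prop :=
  p.head? = some a ∧ p.getLast? = some b ∧ p.Nodup ∧ p.Chain' G.Edge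

/-- `x` is a (strict) descendant of `v`. -/
def Desc (v x : Node d) : Prop := Relation.TransGen G.adj v x

/-- The consecutive triple `u, m, w` on a path blocks the path given `C`:
either `m` is a non-collider lying in `C`, or `m` is a collider such that
neither `m` nor any of its descendants lies in `C`. -/
def BlockedAt (C : Set (Node d)) (u m w : Node d) : Prop :=
  (¬ (G.adj u m ∧ G.adj w m) ∧ m ∈ C) ∨
  ((G.adj u m ∧ G.adj w m) ∧ m ∉ C ∧ ∀ x, G.Desc m x → x ∉ C)

/-- A path `p` is blocked by `C` if some consecutive triple on it blocks it. -/
def Blocked (C : Set (Node d)) (p : List (Node d)) : Prop :=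
  ∃ q u m w r, p = q ++ u :: m :: w :: r ∧ G.BlockedAt C u m w

/-- `a` and `b` are d-separated given `C`: every path between them is blocked. -/
def DSep (a b : Node d) (C : Set (Node d)) : Prop :=
  ∀ p, G.IsPath p a b → G.Blocked C p

/-- `S ⊆ {1, …, d}` is invariant if `E` and `Y` are d-separated given `S`. -/
def Invariant (S : Set (Fin d)) : Prop := G.DSep Node.E Node.Y (Node.V '' S)

/-- `S` is minimally invariant if it is invariant and no strict subset of `S`
is invariant. -/
def MinInvariant (S : Set (Fin d)) : Prop :=
  G.Invariant S ∧ ∀ S', S' ⊂ S → ¬ G.Invariant S'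

/-- `S_AS`: the union of all minimally invariant sets. -/
def SAS : Set (Fin d) := ⋃₀ {S | G.MinInvariant S}

/-- `S_ICP`: the intersection of all invariant sets (`∅` if there are none). -/
def SICP : Set (Fin d) :=
  {j | (∃ S, G.Invariant S) ∧ ∀ S, G.Invariant S → j ∈ S}

/-- `S_AS^m`: the union of all minimally invariant sets of cardinality `≤ m`. -/
def SASm (m : ℕ) : Set (Fin d) := ⋃₀ {S | G.MinInvariant S ∧ S.ncard ≤ m}

/-- The parents of `Y` among `{1, …, d}`. -/
def paY : Set (Fin d) := {j | G.adj (Node.V j) Node.Y}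

/-- The children of `E` among `{1, …, d}`. -/
def chE : Set (Fin d) := {j | G.adj Node.E (Node.V j)}

/-- The ancestors of `Y` among `{1, …, d}`. -/
def anY : Set (Fin d) := {j | Relation.TransGen G.adj (Node.V j) Node.Y}

/-- `PA(A)`: the union of the parent sets of the elements of `A ⊆ {1, …, d}`. -/
def paOf (A : Set (Fin d)) : Set (Fin d) := {j | ∃ i ∈ A, G.adj (Node.V j) (Node.V i)}

end CGraph

/-!
Let `j ∉ S` be a parent of `Y` and of some `i ∈ AN_Y ∩ CH_E`. The path `E → i ← j → Y` is
blocked by `S`, and since the non-collider `j` is not in `S`, the collider `i` must block it: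
neither `i` nor any of its descendants lies in `S`. But then a directed path `E → i → ⋯ → Y`
is open, since directed paths contain no colliders and all its nodes other than `E` are `i`
or descendants of `i`.
-/

theorem List.IsChain.pairwise_transGen {α : Type*} {r : α → α → Prop} {l : List α}
    (h : l.IsChain r) : l.Pairwise (Relation.TransGen r) :=
  List.isChain_iff_pairwise.mp (h.imp fun _ _ => Relation.TransGen.single)

theorem List.IsChain.nodup_of_acyclic {α : Type*} {r : α → α → Prop} {l : List α}
    (hr : ∀ a, ¬ Relation.TransGen r a a) (h : l.IsChain r) : l.Nodup :=
  h.pairwise_transGen.imp fun {a b} (hab : Relation.TransGen r a b) (hEq : a = b) =>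
    hr b (hEq ▸ hab)

namespace CGraph

variable {d : ℕ} (G : CGraph d)

theorem adj_asymm {u v : Node d} (huv : G.adj u v) : ¬ G.adj v u := fun hvu =>
  G.acyclic u (.tail (.single huv) hvu)

theorem isPath_of_isChain {p : List (Node d)} {a b : Node d} (hp : p.IsChain G.adj)
    (ha : p.head? = some a) (hb : p.getLast? = some b) : G.IsPath p a b :=
  ⟨ha, hb, hp.nodup_of_acyclic G.acyclic, hp.imp fun _ _ => Or.inl⟩

variable {G} {C : Set (Node d)}

theorem blockedAt_collider_iff {u m w : Node d} (hum : G.adj u m) (hwm : G.adj w m) :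
    G.BlockedAt C u m w ↔ m ∉ C ∧ ∀ x, G.Desc m x → x ∉ C := by
  simp [BlockedAt, hum, hwm]

theorem blockedAt_iff_of_not_collider {u m w : Node d} (h : ¬ (G.adj u m ∧ G.adj w m)) :
    G.BlockedAt C u m w ↔ m ∈ C := by
  simp [BlockedAt, h]

theorem Blocked.three_le_length {p : List (Node d)} (hp : G.Blocked C p) : 3 ≤ p.length := by
  obtain ⟨q, u, m, w, r, rfl, -⟩ := hp
  simp only [List.length_append, List.length_cons]
  omega

theorem blocked_cons_cons_cons {u m w : Node d} {r : List (Node d)} :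
    G.Blocked C (u :: m :: w :: r) ↔ G.BlockedAt C u m w ∨ G.Blocked C (m :: w :: r) := by
  constructor
  · rintro ⟨_ | ⟨a, q⟩, u', m', w', r', hp, hb⟩
    · simp only [List.nil_append, List.cons.injEq] at hp
      obtain ⟨rfl, rfl, rfl, -⟩ := hp
      exact .inl hb
    · simp only [List.cons_append, List.cons.injEq] at hp
      exact .inr ⟨q, u', m', w', r', hp.2, hb⟩
  · rintro (hb | ⟨q, u', m', w', r', hp, hb⟩)
    · exact ⟨[], u, m, w, r, rfl, hb⟩
    · exact ⟨u :: q, u', m', w', r', by simp [hp], hb⟩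

/-- A directed path contains no colliders. -/
theorem Blocked.exists_mem_of_isChain {p : List (Node d)} (hb : G.Blocked C p)
    (hp : p.IsChain G.adj) : ∃ m ∈ p, m ∈ C := by
  obtain ⟨q, u, m, w, r, rfl, hb⟩ := hb
  have hchain : [u, m, w].IsChain G.adj := hp.infix ⟨q, r, by simp⟩
  simp only [List.isChain_cons_cons, List.isChain_singleton, and_true] at hchain
  exact ⟨m, by simp, (blockedAt_iff_of_not_collider
    fun h => G.adj_asymm hchain.2 h.2).mp hb⟩

theorem DSep.not_mem_of_reflTransGen_of_collider {a m v b : Node d} (h : G.DSep a b C)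
    (hnd : [a, m, v, b].Nodup) (ham : G.adj a m) (hvm : G.adj v m) (hvb : G.adj v b)
    (hv : v ∉ C) : ∀ x, Relation.ReflTransGen G.adj m x → x ∉ C := by
  have hblocked := h _ ⟨rfl, rfl, hnd,
    .cons_cons (.inl ham) (.cons_cons (.inr hvm) (.cons_cons (.inl hvb) (.singleton _)))⟩
  rw [blocked_cons_cons_cons, blocked_cons_cons_cons, blockedAt_collider_iff ham hvm,
    blockedAt_iff_of_not_collider fun h => G.adj_asymm hvm h.1] at hblocked
  obtain ⟨hm, hdesc⟩ := hblocked.resolve_right <| by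
    rintro (hvC | hb)
    · exact hv hvC
    · simpa using hb.three_le_length
  intro x hx
  rcases Relation.reflTransGen_iff_eq_or_transGen.mp hx with rfl | hx
  · exact hm
  · exact hdesc x hx

theorem DSep.exists_reflTransGen_mem {a v b : Node d} (h : G.DSep a b C) (ha : a ∉ C)
    (hav : G.adj a v) (hvb : Relation.TransGen G.adj v b) :
    ∃ x, Relation.ReflTransGen G.adj v x ∧ x ∈ C := by
  obtain ⟨l, hl, hlast⟩ := List.exists_isChain_cons_of_relationReflTransGen hvb.to_reflTransGen
  have hdirected : (a :: v :: l).IsChain G.adj := hl.cons_cons hav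
  have hpath := G.isPath_of_isChain hdirected rfl <| by
    rw [List.getLast?_cons_cons, List.getLast?_eq_getLast_of_ne_nil (by simp), hlast]
  obtain ⟨x, hx, hxC⟩ := (h _ hpath).exists_mem_of_isChain hdirected
  have hxa : x ≠ a := by rintro rfl; exact ha hxC
  rcases List.mem_cons.mp ((List.mem_cons.mp hx).resolve_left hxa) with rfl | hx
  · exact ⟨x, .refl, hxC⟩
  · exact ⟨x, (List.rel_of_pairwise_cons hl.pairwise_transGen hx).to_reflTransGen, hxC⟩

end CGraph

/-- every invariant set `S` satisfies
`PA_Y ∩ PA(AN_Y ∩ CH_E) ⊆ S`. -/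
theorem paY_inter_paOf_subset_invariant {d : ℕ} (G : CGraph d)
    (S : Set (Fin d)) (hS : G.Invariant S) :
    G.paY ∩ G.paOf (G.anY ∩ G.chE) ⊆ S := by
  rintro j ⟨hjY, i, ⟨hiY, hEi⟩, hji⟩
  by_contra hjS
  have hsep : G.DSep .E .Y (Node.V '' S) := hS
  have hij : i ≠ j := by rintro rfl; exact G.adj_asymm hji hji
  have hclosed := hsep.not_mem_of_reflTransGen_of_collider (by simp [hij]) hEi hji hjY
    (by simpa using hjS)
  obtain ⟨x, hix, hxS⟩ := hsep.exists_reflTransGen_mem (by simp) hEi hiY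
  exact hclosed x hix hxS
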